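/- arXiv:math/0503045 — 6 statements merged into one kernel-verified Lean document; each statement's English description precedes it below -/
import Mathlib

section
/- Let Γ be a group. A finitely generated group G is fully residually Γ if and only if there exists a stable sequence of homomorphisms (h_n : G → Γ) whose stable kernel is trivial. -/
open Filter

universe uG

/-- A sequence of homomorphisms `h : ℕ → G →* Γ` is *stable* if for every `g ∈ G`,
either `h n g = 1` for all but finitely many `n`, or `h n g ≠ 1` for all but
finitely many `n`. -/
def StableSeq {G Γ : Type*} [Group G] [Group Γ] (h : ℕ → G →* Γ) : Prop :=
  ∀ g : G, (∀ᶠ n in atTop, h n g = 1) ∨ (∀ᶠ n in atTop, h n g ≠ 1)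

/-- The *stable kernel* of a sequence of homomorphisms: the set of `g ∈ G` such that
`h n g = 1` for all but finitely many `n`.  It is always a subgroup. -/
def stableKer {G Γ : Type*} [Group G] [Group Γ] (h : ℕ → G →* Γ) : Subgroup G where
  carrier := { g | ∀ᶠ n in atTop, h n g = 1 }
  one_mem' := Eventually.of_forall fun n => map_one (h n)
  mul_mem' := fun ha hb => (ha.and hb).mono fun n hn => by
    simp only [map_mul, hn.1, hn.2, one_mul]
  inv_mem' := fun ha => ha.mono fun n hn => by
    simp only [map_inv, hn, inv_one]

instance stableKer_normal {G Γ : Type*} [Group G] [Group Γ] (h : ℕ → G →* Γ) :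
    (stableKer h).Normal where
  conj_mem := fun x hx g => hx.mono fun n hn => by
    simp only [map_mul, map_inv, hn, mul_one, mul_inv_cancel]

/-- `q : G →* L` is a `Γ`-limit quotient of `G` if it is surjective and its kernel
is the stable kernel of some stable sequence of homomorphisms `G →* Γ`. -/
def IsLimitQuotient (Γ : Type*) [Group Γ] {G L : Type*} [Group G] [Group L]
    (q : G →* L) : Prop :=
  Function.Surjective q ∧ ∃ h : ℕ → G →* Γ, StableSeq h ∧ q.ker = stableKer h

/-- `L` is a `Γ`-limit group if it is (isomorphic to) a `Γ`-limit quotient of some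
finitely generated group. -/
def IsLimitGroup (Γ : Type*) [Group Γ] (L : Type*) [Group L] : Prop :=
  ∃ (G : GrpCat.{uG}) (q : G →* L), Group.FG G ∧ IsLimitQuotient Γ q

/-- The strict order on limit quotients of a fixed group `G`: `R₁ > R₂` iff there is an
epimorphism `τ : R₁ → R₂` with nontrivial kernel such that `q₂ = τ ∘ q₁`. -/
def QuotGT {G R₁ R₂ : Type*} [Group G] [Group R₁] [Group R₂]
    (q₁ : G →* R₁) (q₂ : G →* R₂) : Prop :=
  ∃ τ : R₁ →* R₂, Function.Surjective τ ∧ τ.ker ≠ ⊥ ∧ q₂ = τ.comp q₁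

/-- Two quotients of `G` are equivalent if they differ by an isomorphism commuting with the
quotient maps. -/
def QuotEquiv {G R₁ R₂ : Type*} [Group G] [Group R₁] [Group R₂]
    (q₁ : G →* R₁) (q₂ : G →* R₂) : Prop :=
  ∃ τ : R₁ ≃* R₂, ∀ g : G, τ (q₁ g) = q₂ g

/-- `G` is fully residually `Γ` if every finite subset of `G` is mapped injectively by
some homomorphism `G →* Γ`. -/
def FullyResidually (Γ : Type*) [Group Γ] (G : Type*) [Group G] : Prop :=
  ∀ F : Finset G, ∃ h : G →* Γ, Set.InjOn h ↑F

/-- `Γ` has the *factorization property* if for every finitely generated group `H` and every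
stable sequence `h : ℕ → H →* Γ` with stable kernel `K`, some subsequence of `h` consists of
homomorphisms factoring through `H ⧸ K`. -/
def FactorizationProperty (Γ : Type*) [Group Γ] : Prop :=
  ∀ (H : GrpCat.{uG}), Group.FG H → ∀ h : ℕ → H →* Γ, StableSeq h →
    ∃ φ : ℕ → ℕ, StrictMono φ ∧ ∀ t : ℕ,
      ∃ π : (H ⧸ stableKer h) →* Γ, h (φ t) = π.comp (QuotientGroup.mk' (stableKer h))

/-! Both sides say that each `g ≠ 1` survives `h n` for all large `n`. Given full residuality,
such a sequence comes from an enumeration of the countable group `G`; conversely, finitely many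
of these eventual conditions hold simultaneously, giving injectivity on any finite set. -/

theorem Group.countable_of_fg (G : Type*) [Group G] [Group.FG G] : Countable G := by
  obtain ⟨α, _, φ, hφ⟩ := Group.fg_iff_exists_freeGroup_hom_surjective_finite.mp ‹Group.FG G›
  exact hφ.countable

section EventuallyFaithful

variable {G Γ : Type*} [Group G] [Group Γ]

theorem stableSeq_and_stableKer_eq_bot_iff {h : ℕ → G →* Γ} :
    StableSeq h ∧ stableKer h = ⊥ ↔ ∀ g : G, g ≠ 1 → ∀ᶠ n in atTop, h n g ≠ 1 := by
  constructor
  · rintro ⟨hstable, hker⟩ g hg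
    refine (hstable g).resolve_left fun hg' => hg ?_
    rwa [← Subgroup.mem_bot, ← hker]
  · intro H
    refine ⟨fun g => ?_, (Subgroup.eq_bot_iff_forall _).mpr fun g hg => ?_⟩
    · rcases eq_or_ne g 1 with rfl | hg
      · exact Or.inl (Eventually.of_forall fun n => map_one (h n))
      · exact Or.inr (H g hg)
    · by_contra hg1
      exact ((show ∀ᶠ n in atTop, h n g = 1 from hg).and (H g hg1)).exists.elim
        fun _ hn => hn.2 hn.1

theorem eventually_injOn_of_eventually_ne_one {h : ℕ → G →* Γ}
    (H : ∀ g : G, g ≠ 1 → ∀ᶠ n in atTop, h n g ≠ 1) (F : Finset G) :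
    ∀ᶠ n in atTop, Set.InjOn (h n) F := by
  have hpair : ∀ a ∈ F, ∀ b ∈ F, ∀ᶠ n in atTop, h n a = h n b → a = b := by
    intro a _ b _
    rcases eq_or_ne a b with rfl | hab
    · exact Eventually.of_forall fun _ _ => rfl
    · filter_upwards [H (a * b⁻¹) (mul_inv_eq_one.not.mpr hab)] with n hn heq
      exact absurd (by rw [map_mul, map_inv, heq, mul_inv_cancel]) hn
  simp only [← Finset.eventually_all] at hpair
  exact hpair.mono fun n hn a ha b hb => hn a ha b hb

theorem FullyResidually.of_eventually_ne_one {h : ℕ → G →* Γ}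
    (H : ∀ g : G, g ≠ 1 → ∀ᶠ n in atTop, h n g ≠ 1) : FullyResidually Γ G :=
  fun F =>
    let ⟨n, hn⟩ := (eventually_injOn_of_eventually_ne_one H F).exists
    ⟨h n, hn⟩

theorem FullyResidually.exists_eventually_ne_one [Countable G] (hG : FullyResidually Γ G) :
    ∃ h : ℕ → G →* Γ, ∀ g : G, g ≠ 1 → ∀ᶠ n in atTop, h n g ≠ 1 := by
  classical
  obtain ⟨e, he⟩ := exists_surjective_nat G
  -- `h n` separates the first `n + 1` elements of an enumeration of `G` from `1`.
  choose h hinj using fun n : ℕ => hG (insert 1 ((Finset.range (n + 1)).image e))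
  refine ⟨h, fun g hg => ?_⟩
  obtain ⟨k, rfl⟩ := he g
  filter_upwards [eventually_ge_atTop k] with n hn hk
  refine hg (hinj n ?_ (by simp) (by rw [hk, map_one]))
  simp only [Finset.coe_insert, Finset.coe_image, Finset.coe_range]
  exact Set.mem_insert_of_mem _ ⟨k, Nat.lt_succ_of_le hn, rfl⟩

end EventuallyFaithful

/-- a finitely generated group `G` is fully residually `Γ` iff there is a
stable sequence of homomorphisms `G →* Γ` with trivial stable kernel. -/
theorem statement_2 {Γ G : Type*} [Group Γ] [Group G] [Group.FG G] :
    FullyResidually Γ G ↔ ∃ h : ℕ → G →* Γ, StableSeq h ∧ stableKer h = ⊥ := by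
  have := Group.countable_of_fg G
  simp only [stableSeq_and_stableKer_eq_bot_iff]
  exact ⟨FullyResidually.exists_eventually_ne_one, fun ⟨_, H⟩ => .of_eventually_ne_one H⟩
end

section
/- Suppose the group Γ has the factorization property. Then for every finitely generated group G and every Γ-limit quotient q : G → L of G, there exists a sequence of homomorphisms (ρ_t : L → Γ) that is stable and has trivial stable kernel. Consequently, every Γ-limit group is fully residually Γ. -/
open Filter

universe uG

/-!
Pull the defining sequence `h` of `q : G → L` back along a surjection `p : H → G` from a
finitely generated group `H` in the universe of the factorization property. A subsequence of
`h ∘ p` then factors through `H ⧸ stableKer (h ∘ p) = H ⧸ ker (q ∘ p) ≅ L`, i.e.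
`h (φ t) ∘ p = ρ t ∘ q ∘ p`. A subsequence of a stable sequence is stable with the same
stable kernel, and precomposition with the surjection `q ∘ p` reflects stability and pulls
stable kernels back; so `ρ` is stable and its stable kernel pulls back to `ker (q ∘ p)`, hence
is trivial. A trivial stable kernel makes every `a * b⁻¹ ≠ 1` survive under `ρ t` for all
large `t`, simultaneously for the finitely many pairs from a finite set.
-/

universe u

theorem Group.FG.exists_surjective_from_fg_in_universe (G : Type*) [Group G] [Group.FG G] :
    ∃ (H : Type u) (_ : Group H), Group.FG H ∧ ∃ p : H →* G, Function.Surjective p := by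
  obtain ⟨α, _, φ, hφ⟩ := Group.fg_iff_exists_freeGroup_hom_surjective_finite.mp ‹_›
  let e : ULift.{u} (FreeGroup α) ≃* FreeGroup α := MulEquiv.ulift
  exact ⟨ULift (FreeGroup α), inferInstance,
    Group.fg_of_surjective (f := e.symm.toMonoidHom) e.symm.surjective,
    φ.comp e.toMonoidHom, hφ.comp e.surjective⟩

theorem MonoidHom.exists_comp_eq_of_ker_le {G H K : Type*} [Group G] [Group H] [Group K]
    {f : G →* H} (hf : Function.Surjective f) {g : G →* K} (hg : f.ker ≤ g.ker) :
    ∃ ρ : H →* K, ρ.comp f = g :=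
  ⟨f.liftOfSurjective hf ⟨g, hg⟩, f.liftOfRightInverse_comp _ _ _⟩

section

variable {G H Γ : Type*} [Group G] [Group H] [Group Γ]

theorem stableKer_comp (h : ℕ → G →* Γ) (p : H →* G) :
    stableKer (fun n => (h n).comp p) = (stableKer h).comap p :=
  rfl

namespace StableSeq

theorem comp {h : ℕ → G →* Γ} (hh : StableSeq h) (p : H →* G) :
    StableSeq fun n => (h n).comp p :=
  fun x => hh (p x)

theorem of_comp_surjective {ρ : ℕ → G →* Γ} {p : H →* G} (hp : Function.Surjective p)
    (hρ : StableSeq fun n => (ρ n).comp p) : StableSeq ρ := by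
  intro g
  obtain ⟨x, rfl⟩ := hp g
  exact hρ x

theorem subseq {h : ℕ → G →* Γ} (hh : StableSeq h) {φ : ℕ → ℕ} (hφ : StrictMono φ) :
    StableSeq fun t => h (φ t) :=
  fun g => (hh g).imp (hφ.tendsto_atTop.eventually ·) (hφ.tendsto_atTop.eventually ·)

theorem stableKer_subseq {h : ℕ → G →* Γ} (hh : StableSeq h) {φ : ℕ → ℕ}
    (hφ : StrictMono φ) : stableKer (fun t => h (φ t)) = stableKer h := by
  ext g
  refine ⟨fun hg => (hh g).resolve_right fun hne => ?_, hφ.tendsto_atTop.eventually⟩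
  obtain ⟨t, heq, hne⟩ := (hg.and (hφ.tendsto_atTop.eventually hne)).exists
  exact hne heq

theorem fullyResidually {ρ : ℕ → G →* Γ} (hρ : StableSeq ρ) (hker : stableKer ρ = ⊥) :
    FullyResidually Γ G := by
  intro F
  have hsep : ∀ a ∈ F, ∀ b ∈ F, ∀ᶠ n in atTop, a ≠ b → ρ n a ≠ ρ n b := by
    intro a _ b _
    by_cases hab : a = b
    · exact .of_forall fun _ hne => (hne hab).elim
    have hnot : a * b⁻¹ ∉ stableKer ρ := by rwa [hker, Subgroup.mem_bot, mul_inv_eq_one]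
    exact ((hρ _).resolve_left hnot).mono fun n hn _ => by
      rwa [map_mul, map_inv, Ne, mul_inv_eq_one] at hn
  obtain ⟨n, hn⟩ := ((eventually_all_finset F).2 fun a ha =>
    (eventually_all_finset F).2 (hsep a ha)).exists
  exact ⟨ρ n, fun a ha b hb hab => not_imp_not.mp (hn a ha b hb) hab⟩

end StableSeq

end

theorem IsLimitQuotient.exists_stableSeq_stableKer_eq_bot {Γ : Type*} [Group Γ]
    (hfac : FactorizationProperty.{u} Γ) {G L : Type*} [Group G] [Group.FG G] [Group L]
    {q : G →* L} (hq : IsLimitQuotient Γ q) :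
    ∃ ρ : ℕ → L →* Γ, StableSeq ρ ∧ stableKer ρ = ⊥ := by
  obtain ⟨hq, h, hh, hker⟩ := hq
  obtain ⟨H, _, hH, p, hp⟩ := Group.FG.exists_surjective_from_fg_in_universe.{u} G
  have hqp : Function.Surjective (q.comp p) := hq.comp hp
  have hK : stableKer (fun n => (h n).comp p) = (q.comp p).ker := by
    rw [stableKer_comp, ← hker, MonoidHom.comap_ker]
  obtain ⟨φ, hφ, hfactor⟩ := hfac (GrpCat.of H) hH _ (hh.comp p)
  have hlift : ∀ t, ∃ ρ : L →* Γ, ρ.comp (q.comp p) = (h (φ t)).comp p := by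
    intro t
    obtain ⟨π, hπ⟩ := hfactor t
    refine MonoidHom.exists_comp_eq_of_ker_le hqp fun x hx => ?_
    rw [← hK] at hx
    simp [MonoidHom.mem_ker, hπ, (QuotientGroup.eq_one_iff x).mpr hx]
  choose ρ hρ using hlift
  have hρp : (fun t => (ρ t).comp (q.comp p)) = fun t => (h (φ t)).comp p := funext hρ
  have hstable : StableSeq fun t => (ρ t).comp (q.comp p) := hρp ▸ (hh.comp p).subseq hφ
  refine ⟨ρ, hstable.of_comp_surjective hqp, Subgroup.comap_injective hqp ?_⟩
  rw [← stableKer_comp, MonoidHom.comap_bot, hρp,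
    (hh.comp p).stableKer_subseq hφ, hK]

/-- if `Γ` has the factorization property, then for every finitely generated
group `G` and every `Γ`-limit quotient `q : G →* L`, there is a stable sequence of
homomorphisms `L →* Γ` with trivial stable kernel; consequently every `Γ`-limit group is
fully residually `Γ`. -/
theorem statement_3 {Γ : Type*} [Group Γ] (hfac : FactorizationProperty Γ)
    {G L : Type*} [Group G] [Group.FG G] [Group L]
    (q : G →* L) (hq : IsLimitQuotient Γ q) :
    (∃ ρ : ℕ → L →* Γ, StableSeq ρ ∧ stableKer ρ = ⊥) ∧
    (∀ (L' : Type) [Group L'], IsLimitGroup Γ L' → FullyResidually Γ L') := by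
  refine ⟨hq.exists_stableSeq_stableKer_eq_bot hfac, ?_⟩
  rintro L' _ ⟨G', q', hG', hq'⟩
  have : Group.FG G' := hG'
  obtain ⟨ρ, hρ, hker⟩ := hq'.exists_stableSeq_stableKer_eq_bot hfac
  exact hρ.fullyResidually hker
end

section
/- Suppose the group Γ has the factorization property. Then for every finitely generated group G there are only finitely many equivalence classes of maximal elements in the set of Γ-limit quotients of G. -/
open Filter

universe uG

/-- A `Γ`-limit quotient of `G` is *maximal* if no `Γ`-limit quotient of `G` is strictly
above it. -/
def IsMaximalLimitQuotient (Γ : Type*) [Group Γ] {G L : Type*} [Group G] [Group L]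
    (q : G →* L) : Prop :=
  IsLimitQuotient Γ q ∧
    ∀ (R : GrpCat.{uG}) (q' : G →* R), IsLimitQuotient Γ q' → ¬ QuotGT q' q

/-! The factorization property makes `Γ` equationally Noetherian: a set `S ⊆ G` is killed by
every homomorphism `G →* Γ` that kills a suitable finite subset of `S`. Indeed, otherwise there
are homomorphisms `fₙ` killing the first `n` elements of `S` but not all of `S`; a stable
subsequence of them has a stable kernel containing `S`, and a member factoring through that
stable kernel kills all of `S`.

Maximal limit quotients of `G` are the quotients by the minimal stable kernels. If there were
infinitely many of them, `K₀, K₁, …`, pick `fᵢ` killing `Kᵢ` and nontrivial on the first `i`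
elements of `G` outside `Kᵢ`, and a stable subsequence with stable kernel `K`. A finite set `F`
determining `K` lies in `Kᵢ` for all large `i` of the subsequence, and since stable kernels are
intersections of kernels of homomorphisms to `Γ`, `K ≤ Kᵢ`. By minimality `K = Kᵢ` for
infinitely many `i`, contradicting that the `Kᵢ` are distinct. -/

open Filter Function

universe u

section

variable {Γ G : Type*} [Group Γ] [Group G]

theorem Group.FG.countable [Group.FG G] : Countable G := by
  obtain ⟨α, _, φ, hφ⟩ := Group.fg_iff_exists_freeGroup_hom_surjective_finite.1 ‹Group.FG G›
  exact hφ.countable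

/-- A compactness argument in the Cantor space `G → Bool`. -/
theorem exists_strictMono_stableSeq_comp [Countable G] (f : ℕ → G →* Γ) :
    ∃ ψ : ℕ → ℕ, StrictMono ψ ∧ StableSeq (f ∘ ψ) := by
  classical
  obtain ⟨a, ψ, hψ, hlim⟩ :=
    SeqCompactSpace.tendsto_subseq (X := G → Bool) fun n g => decide (f n g = 1)
  refine ⟨ψ, hψ, fun g => ?_⟩
  have hg := tendsto_pi_nhds.1 hlim g
  rw [nhds_discrete, tendsto_pure] at hg
  cases hag : a g
  · exact .inr (hg.mono fun k hk => by simpa [hag] using hk)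
  · exact .inl (hg.mono fun k hk => by simpa [hag] using hk)

def IsStableKer (Γ : Type*) [Group Γ] {G : Type*} [Group G] (N : Subgroup G) : Prop :=
  ∃ h : ℕ → G →* Γ, StableSeq h ∧ stableKer h = N

namespace FactorizationProperty

variable [Group.FG G]

/-- The factorization property, transported along `Shrink` to a finitely generated group in an
arbitrary universe. -/
theorem exists_strictMono_stableKer_le_ker (hfac : FactorizationProperty.{u} Γ)
    {h : ℕ → G →* Γ} (hs : StableSeq h) :
    ∃ φ : ℕ → ℕ, StrictMono φ ∧ ∀ t, stableKer h ≤ (h (φ t)).ker := by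
  have : Countable G := Group.FG.countable
  let σ : Shrink.{u} G ≃* G := Shrink.mulEquiv
  have hFG : Group.FG (Shrink.{u} G) :=
    Group.fg_of_surjective (f := σ.symm.toMonoidHom) σ.symm.surjective
  obtain ⟨φ, hφ, hfact⟩ :=
    hfac (GrpCat.of (Shrink.{u} G)) hFG (fun n => (h n).comp σ.toMonoidHom) fun x => hs (σ x)
  refine ⟨φ, hφ, fun t g hg => ?_⟩
  obtain ⟨π, hπ⟩ := hfact t
  have hg' : σ.symm g ∈ stableKer fun n => (h n).comp σ.toMonoidHom := by
    simpa [stableKer] using hg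
  have hπg := DFunLike.congr_fun hπ (σ.symm g)
  simp only [MonoidHom.comp_apply, QuotientGroup.mk'_apply] at hπg
  rw [(QuotientGroup.eq_one_iff _).2 hg', map_one] at hπg
  simpa using hπg

theorem exists_stableKer_le_ker_and_ne_one (hfac : FactorizationProperty.{u} Γ)
    {h : ℕ → G →* Γ} (hs : StableSeq h) {A : Set G} (hA : A.Finite) :
    ∃ f : G →* Γ, stableKer h ≤ f.ker ∧ ∀ g ∈ A, g ∉ stableKer h → f g ≠ 1 := by
  obtain ⟨φ, hφ, hker⟩ := hfac.exists_strictMono_stableKer_le_ker hs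
  have hev : ∀ᶠ t in atTop, ∀ g ∈ A, g ∉ stableKer h → h (φ t) g ≠ 1 := by
    refine hA.eventually_all.2 fun g _ => ?_
    by_cases hg : g ∈ stableKer h
    · exact .of_forall fun _ hg' => (hg' hg).elim
    · exact (hφ.tendsto_atTop.eventually ((hs g).resolve_left hg)).mono fun _ hne _ => hne
  obtain ⟨t, ht⟩ := hev.exists
  exact ⟨h (φ t), hker t, ht⟩

theorem exists_finset_forall_map_eq_one (hfac : FactorizationProperty.{u} Γ) (S : Set G) :
    ∃ F : Finset G, ↑F ⊆ S ∧ ∀ f : G →* Γ, (∀ x ∈ F, f x = 1) → ∀ g ∈ S, f g = 1 := by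
  classical
  have : Countable G := Group.FG.countable
  obtain ⟨e, he⟩ := exists_surjective_nat G
  by_contra! hS
  have hF : ∀ n, ↑((Finset.range n).image e |>.filter (· ∈ S)) ⊆ S := fun n x hx =>
    (Finset.mem_filter.1 hx).2
  choose f hfF x hxS hfx using fun n => hS _ (hF n)
  obtain ⟨ψ, hψ, hstab⟩ := exists_strictMono_stableSeq_comp f
  have hSle : S ⊆ stableKer (f ∘ ψ) := by
    intro g hg
    obtain ⟨j, rfl⟩ := he g
    refine (hψ.tendsto_atTop.eventually_gt_atTop j).mono fun k hk => hfF _ _ ?_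
    exact Finset.mem_filter.2 ⟨Finset.mem_image_of_mem e (Finset.mem_range.2 hk), hg⟩
  obtain ⟨φ, -, hker⟩ := hfac.exists_strictMono_stableKer_le_ker hstab
  exact hfx _ (hker 0 (hSle (hxS (ψ (φ 0)))))

theorem eq_iInf_ker (hfac : FactorizationProperty.{u} Γ) {N : Subgroup G}
    (hN : IsStableKer Γ N) : N = ⨅ (f : G →* Γ) (_ : N ≤ f.ker), f.ker := by
  obtain ⟨h, hs, rfl⟩ := hN
  refine le_antisymm (le_iInf₂ fun _ hf => hf) fun g hg => ?_
  by_contra hgN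
  obtain ⟨f, hf, hfg⟩ := hfac.exists_stableKer_le_ker_and_ne_one hs (Set.finite_singleton g)
  exact hfg g rfl hgN (Subgroup.mem_iInf.1 (Subgroup.mem_iInf.1 hg f) hf)

theorem finite_setOf_minimal_isStableKer (hfac : FactorizationProperty.{u} Γ) :
    {N : Subgroup G | Minimal (IsStableKer Γ) N}.Finite := by
  have : Countable G := Group.FG.countable
  obtain ⟨e, he⟩ := exists_surjective_nat G
  refine Set.not_infinite.1 fun hinf => ?_
  let K : ℕ → Subgroup G := fun i => hinf.natEmbedding _ i
  have hKinj : Injective K := Subtype.val_injective.comp (hinf.natEmbedding _).injective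
  have hK : ∀ i, Minimal (IsStableKer Γ) (K i) := fun i => (hinf.natEmbedding _ i).2
  have hsep : ∀ i, ∃ f : G →* Γ, K i ≤ f.ker ∧ ∀ g ∈ e '' Set.Iio i, g ∉ K i → f g ≠ 1 := by
    intro i
    obtain ⟨h, hs, hh⟩ := (hK i).prop
    rw [← hh]
    exact hfac.exists_stableKer_le_ker_and_ne_one hs ((Set.finite_Iio i).image e)
  choose f hfK hfe using hsep
  obtain ⟨ψ, hψ, hstab⟩ := exists_strictMono_stableSeq_comp f
  obtain ⟨F, hFK, hF⟩ := hfac.exists_finset_forall_map_eq_one (stableKer (f ∘ ψ) : Set G)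
  have hFker : ∀ᶠ k in atTop, ∀ x ∈ F, f (ψ k) x = 1 := F.eventually_all.2 fun x hx => hFK hx
  have hFe : ∀ᶠ k in atTop, ∀ x ∈ F, x ∈ e '' Set.Iio (ψ k) := F.eventually_all.2 fun x _ => by
    obtain ⟨j, rfl⟩ := he x
    exact (hψ.tendsto_atTop.eventually_gt_atTop j).mono fun k hk => ⟨j, hk, rfl⟩
  have hle : ∀ᶠ k in atTop, stableKer (f ∘ ψ) ≤ K (ψ k) := by
    filter_upwards [hFker, hFe] with k hker hmem
    have hFK : ∀ x ∈ F, x ∈ K (ψ k) := fun x hx =>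
      by_contra fun hxK => hfe _ x (hmem x hx) hxK (hker x hx)
    rw [hfac.eq_iInf_ker (hK _).prop]
    exact le_iInf₂ fun φ hφ g hg => hF φ (fun x hx => hφ (hFK x hx)) g hg
  obtain ⟨n, hn⟩ := hle.exists_forall_of_atTop
  have hKψ : ∀ k ≥ n, stableKer (f ∘ ψ) = K (ψ k) := fun k hk =>
    (hK _).eq_of_le ⟨_, hstab, rfl⟩ (hn k hk)
  exact (hψ n.lt_succ_self).ne (hKinj ((hKψ n le_rfl).symm.trans (hKψ (n + 1) n.le_succ)))

end FactorizationProperty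

theorem IsStableKer.exists_isLimitQuotient [Countable G] {N : Subgroup G}
    (hN : IsStableKer Γ N) : ∃ (R : GrpCat.{u}) (q : G →* R), IsLimitQuotient Γ q ∧ q.ker = N := by
  obtain ⟨h, hs, rfl⟩ := hN
  have : Countable (G ⧸ stableKer h) := (QuotientGroup.mk'_surjective _).countable
  let σ : Shrink.{u} (G ⧸ stableKer h) ≃* G ⧸ stableKer h := Shrink.mulEquiv
  have hker : ((σ.symm : G ⧸ stableKer h →* Shrink.{u} (G ⧸ stableKer h)).comp
      (QuotientGroup.mk' _)).ker = stableKer h := by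
    rw [MonoidHom.ker_mulEquiv_comp, QuotientGroup.ker_mk']
  exact ⟨GrpCat.of (Shrink.{u} (G ⧸ stableKer h)), _,
    ⟨σ.symm.surjective.comp (QuotientGroup.mk'_surjective _), h, hs, hker⟩, hker⟩

theorem isMaximalLimitQuotient_iff [Countable G] {L : Type*} [Group L] {q : G →* L}
    (hq : Surjective q) : IsMaximalLimitQuotient.{u} Γ q ↔ Minimal (IsStableKer Γ) q.ker := by
  constructor
  · rintro ⟨⟨-, h, hs, hker⟩, hmax⟩
    refine ⟨⟨h, hs, hker.symm⟩, fun N hN hle => ?_⟩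
    obtain ⟨R, q', hq', rfl⟩ := hN.exists_isLimitQuotient.{u}
    by_contra hne
    let τ := q'.liftOfSurjective hq'.1 ⟨q, hle⟩
    have hτ : ∀ g, τ (q' g) = q g := q'.liftOfRightInverse_comp_apply _ _ _
    refine hmax R q' hq' ⟨τ, fun y => ?_, fun hbot => ?_, MonoidHom.ext fun g => (hτ g).symm⟩
    · obtain ⟨g, rfl⟩ := hq y
      exact ⟨q' g, hτ g⟩
    · obtain ⟨g, hgq, hgq'⟩ := SetLike.not_le_iff_exists.1 hne
      have hg : q' g ∈ τ.ker := by rw [MonoidHom.mem_ker, hτ]; exact hgq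
      rw [hbot, Subgroup.mem_bot] at hg
      exact hgq' hg
  · rintro ⟨⟨h, hs, hker⟩, hmin⟩
    refine ⟨⟨hq, h, hs, hker.symm⟩, fun R q' ⟨hq', h', hs', hker'⟩ ⟨τ, _, hτ, hcomp⟩ => hτ ?_⟩
    have hle : q'.ker ≤ q.ker := fun g hg => by
      rw [MonoidHom.mem_ker, hcomp, MonoidHom.comp_apply, MonoidHom.mem_ker.1 hg, map_one]
    have hge := hmin ⟨h', hs', hker'.symm⟩ hle
    refine (Subgroup.eq_bot_iff_forall _).2 fun y hy => ?_
    obtain ⟨g, rfl⟩ := hq' y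
    exact hge (by rw [MonoidHom.mem_ker, hcomp]; exact hy)

theorem quotEquiv_of_ker_eq {L R : Type*} [Group L] [Group R] {q₁ : G →* L} {q₂ : G →* R}
    (h₁ : Surjective q₁) (h₂ : Surjective q₂) (hk : q₁.ker = q₂.ker) : QuotEquiv q₁ q₂ := by
  let e₁ := QuotientGroup.quotientKerEquivOfSurjective q₁ h₁
  let e₂ := QuotientGroup.quotientKerEquivOfSurjective q₂ h₂
  refine ⟨e₁.symm.trans ((QuotientGroup.quotientMulEquivOfEq hk).trans e₂), fun g => ?_⟩
  have he₁ : e₁.symm (q₁ g) = QuotientGroup.mk g := by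
    rw [MulEquiv.symm_apply_eq]
    rfl
  simp only [MulEquiv.trans_apply, he₁, QuotientGroup.quotientMulEquivOfEq_mk]
  rfl

end

/-- if `Γ` has the factorization property then, for every finitely generated
group `G`, there are only finitely many equivalence classes of maximal elements in the set
of `Γ`-limit quotients of `G`. -/
theorem statement_5 {Γ : Type*} [Group Γ] (hfac : FactorizationProperty Γ)
    (G : Type*) [Group G] [Group.FG G] :
    ∃ (k : ℕ) (R : Fin k → GrpCat.{uG}) (q : ∀ i, G →* R i),
      (∀ i, IsMaximalLimitQuotient Γ (q i)) ∧
      ∀ (L : GrpCat.{uG}) (q' : G →* L), IsMaximalLimitQuotient Γ q' →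
        ∃ i, QuotEquiv q' (q i) := by
  have : Countable G := Group.FG.countable
  obtain ⟨k, N, hN⟩ := (hfac.finite_setOf_minimal_isStableKer (G := G)).fin_embedding
  have hNmin : ∀ i, Minimal (IsStableKer Γ) (N i) := fun i => hN.le ⟨i, rfl⟩
  choose R q hq hqN using fun i => (hNmin i).prop.exists_isLimitQuotient.{uG}
  refine ⟨k, R, q, fun i => (isMaximalLimitQuotient_iff (hq i).1).2 (hqN i ▸ hNmin i),
    fun L q' hq' => ?_⟩
  obtain ⟨i, hi⟩ : q'.ker ∈ Set.range N := hN ▸ (isMaximalLimitQuotient_iff hq'.1.1).1 hq'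
  exact ⟨i, quotEquiv_of_ker_eq hq'.1.1 (hq i).1 (hi ▸ (hqN i).symm)⟩
end

section
/- Let F_d be the free group of rank d, Γ a group, (T_n) a sequence of groups with epimorphisms η_n : F_d → T_n satisfying ker η_1 ⊆ ker η_2 ⊆ ⋯, and (h_n : F_d → Γ) homomorphisms such that for every w ∈ F_d of reduced word length at most n, h_n(w) = 1 if and only if η_n(w) = 1. Then: (1) the sequence (h_n) is stable and its stable kernel equals ⋃_n ker η_n (so the associated Γ-limit quotient of F_d is the direct limit of the sequence F_d → T_1 → T_2 → ⋯); and (2) if in addition for every n there exists f ∈ F_d with η_{n+1}(f) = 1 and h_n(f) ≠ 1, then no h_n factors through the quotient map F_d → F_d / ⋃_n ker η_n. -/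
open Filter

universe uG

/-
Once `n` exceeds the length of `w`, the relation `h n w = 1` agrees with `η n w = 1`, and the
latter is monotone in `n` since the kernels increase. Hence `h n w = 1` holds eventually iff
`w` lies in some `ker η n`, and otherwise `h n w ≠ 1` holds eventually. For (2), the witness
`f` lies in `ker η (n+1)`, hence in the stable kernel, yet `h n f ≠ 1`, so `h n` cannot
factor through the quotient.
-/

section LengthCompatible

variable {G Γ : Type*} [Group G] [Group Γ] {T : ℕ → Type*} [∀ n, Group (T n)]
  {η : ∀ n, G →* T n} {h : ℕ → G →* Γ} {len : G → ℕ}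

theorem eventually_eq_one_iff_exists_eq_one (hmono : Monotone fun n => (η n).ker)
    (hcompat : ∀ n w, len w ≤ n → (h n w = 1 ↔ η n w = 1)) (w : G) :
    (∀ᶠ n in atTop, h n w = 1) ↔ ∃ n, η n w = 1 := by
  constructor
  · intro hev
    obtain ⟨n, hn, hlen⟩ := (hev.and (eventually_ge_atTop (len w))).exists
    exact ⟨n, (hcompat n w hlen).mp hn⟩
  · rintro ⟨n, hn⟩
    filter_upwards [eventually_ge_atTop n, eventually_ge_atTop (len w)] with m hnm hlen
    exact (hcompat m w hlen).mpr (hmono hnm hn)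

theorem eventually_ne_one_of_forall_ne_one
    (hcompat : ∀ n w, len w ≤ n → (h n w = 1 ↔ η n w = 1)) {w : G} (hw : ∀ n, η n w ≠ 1) :
    ∀ᶠ n in atTop, h n w ≠ 1 := by
  filter_upwards [eventually_ge_atTop (len w)] with n hlen
  rw [Ne, hcompat n w hlen]
  exact hw n

theorem stableSeq_of_length_compatible (hmono : Monotone fun n => (η n).ker)
    (hcompat : ∀ n w, len w ≤ n → (h n w = 1 ↔ η n w = 1)) : StableSeq h := by
  intro w
  by_cases hw : ∃ n, η n w = 1
  · exact .inl ((eventually_eq_one_iff_exists_eq_one hmono hcompat w).mpr hw)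
  · exact .inr (eventually_ne_one_of_forall_ne_one hcompat (not_exists.mp hw))

theorem coe_stableKer_eq_iUnion_ker (hmono : Monotone fun n => (η n).ker)
    (hcompat : ∀ n w, len w ≤ n → (h n w = 1 ↔ η n w = 1)) :
    (stableKer h : Set G) = ⋃ n, ((η n).ker : Set G) := by
  ext w
  simp only [SetLike.mem_coe, Set.mem_iUnion, MonoidHom.mem_ker]
  exact eventually_eq_one_iff_exists_eq_one hmono hcompat w

end LengthCompatible

theorem not_exists_eq_comp_mk'_of_mem {G Γ : Type*} [Group G] [Group Γ] {N : Subgroup G}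
    [N.Normal] {φ : G →* Γ} {f : G} (hf : f ∈ N) (hφf : φ f ≠ 1) :
    ¬∃ π : G ⧸ N →* Γ, φ = π.comp (QuotientGroup.mk' N) := by
  rintro ⟨π, rfl⟩
  exact hφf (by simp [(QuotientGroup.eq_one_iff f).mpr hf])

theorem statement_6_general {Γ : Type*} [Group Γ] (d : ℕ)
    (T : ℕ → GrpCat.{uG}) (η : ∀ n, FreeGroup (Fin d) →* T n)
    (hmono : ∀ n, (η n).ker ≤ (η (n + 1)).ker)
    (h : ℕ → FreeGroup (Fin d) →* Γ)
    (hcompat : ∀ (n : ℕ) (w : FreeGroup (Fin d)), w.norm ≤ n →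
      (h n w = 1 ↔ η n w = 1)) :
    (StableSeq h ∧
      (stableKer h : Set (FreeGroup (Fin d))) = ⋃ n, ((η n).ker : Set (FreeGroup (Fin d)))) ∧
    ((∀ n, ∃ f : FreeGroup (Fin d), η (n + 1) f = 1 ∧ h n f ≠ 1) →
      ∀ n, ¬ ∃ π : (FreeGroup (Fin d) ⧸ stableKer h) →* Γ,
        h n = π.comp (QuotientGroup.mk' (stableKer h))) := by
  have hker_mono : Monotone fun n => (η n).ker := monotone_nat_of_le_succ hmono
  refine ⟨⟨stableSeq_of_length_compatible hker_mono hcompat,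
    coe_stableKer_eq_iUnion_ker hker_mono hcompat⟩, fun hsep n => ?_⟩
  obtain ⟨f, hf, hnf⟩ := hsep n
  have hker : f ∈ stableKer h :=
    (eventually_eq_one_iff_exists_eq_one hker_mono hcompat f).mpr ⟨n + 1, hf⟩
  exact not_exists_eq_comp_mk'_of_mem hker hnf

/-- let `F_d` be the free group of rank `d`, `η n : F_d →* T n` epimorphisms
with increasing kernels, and `h n : F_d →* Γ` homomorphisms such that elements of reduced
word length at most `n` are killed by `h n` exactly when they are killed by `η n`.  Then
(1) the sequence `h` is stable with stable kernel `⋃ n, ker (η n)` (so the associated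
`Γ`-limit quotient of `F_d` is the direct limit of the `T n`), and (2) if moreover for
every `n` there is `f` with `η (n+1) f = 1` and `h n f ≠ 1`, then no `h n` factors
through the quotient of `F_d` by this stable kernel `⋃ n, ker (η n)`. -/
theorem statement_6 {Γ : Type*} [Group Γ] (d : ℕ)
    (T : ℕ → GrpCat.{uG}) (η : ∀ n, FreeGroup (Fin d) →* T n)
    (hsurj : ∀ n, Function.Surjective (η n))
    (hmono : ∀ n, (η n).ker ≤ (η (n + 1)).ker)
    (h : ℕ → FreeGroup (Fin d) →* Γ)
    (hcompat : ∀ (n : ℕ) (w : FreeGroup (Fin d)), w.norm ≤ n →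
      (h n w = 1 ↔ η n w = 1)) :
    (StableSeq h ∧
      (stableKer h : Set (FreeGroup (Fin d))) = ⋃ n, ((η n).ker : Set (FreeGroup (Fin d)))) ∧
    ((∀ n, ∃ f : FreeGroup (Fin d), η (n + 1) f = 1 ∧ h n f ≠ 1) →
      ∀ n, ¬ ∃ π : (FreeGroup (Fin d) ⧸ stableKer h) →* Γ,
        h n = π.comp (QuotientGroup.mk' (stableKer h))) :=
  statement_6_general d T η hmono h hcompat
end

section
/- Let Γ be a group, n ≥ 1, and F_n the free group of rank n. Suppose: (i) every strictly descending sequence R_1 > R_2 > ⋯ of Γ-limit quotients of F_n is finite; and (ii) every finitely generated group H admits finitely many Γ-limit quotients η_1 : H → M_1, …, η_k : H → M_k such that every homomorphism from H to Γ factors through some η_i. Then every system of equations over Γ in n variables is equivalent to a finite subsystem: for every subset Σ ⊆ F_n there is a finite subset Σ' ⊆ Σ such that every homomorphism h : F_n → Γ with Σ' ⊆ ker h also satisfies Σ ⊆ ker h. -/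
open Filter

universe uG

/-!
Suppose a system `S` has no equivalent finite subsystem. For each finite `T ⊆ S` pick a
solution `h_T` of `T` that is not a solution of `S`; every `w ∈ S` is killed by `h_T` for all
large `T`. Using (ii), some limit quotient `Q₀` of `F_n` is factored through by `h_T` for
cofinally many `T`. Given such a `Q`, pick `w ∈ S` outside `ker Q`; cofinally many `h_T` also
kill `w`, so (ii) applied to `F_n ⧸ ⟨⟨ker Q, w⟩⟩` yields a strictly smaller limit quotient with
the same property. Iterating contradicts (i).
-/

def HasFiniteLimitQuotientCover (Γ : Type*) [Group Γ] : Prop :=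
  ∀ (H : GrpCat.{uG}), Group.FG H →
    ∃ (k : ℕ) (M : Fin k → GrpCat.{uG}) (η : ∀ i, H →* M i),
      (∀ i, IsLimitQuotient Γ (η i)) ∧
      ∀ f : H →* Γ, ∃ (i : Fin k) (g : M i →* Γ), f = g.comp (η i)

theorem exists_seq_forall_rel_succ {α : Type*} {P : α → Prop} {r : α → α → Prop}
    {a : α} (ha : P a) (h : ∀ a, P a → ∃ b, P b ∧ r a b) :
    ∃ f : ℕ → α, ∀ i, P (f i) ∧ r (f i) (f (i + 1)) := by
  choose next hnextP hnextr using h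
  let step : {a // P a} → {a // P a} := fun b => ⟨next b.1 b.2, hnextP b.1 b.2⟩
  refine ⟨fun i => (step^[i] ⟨a, ha⟩).1, fun i => ⟨(step^[i] ⟨a, ha⟩).2, ?_⟩⟩
  change r (step^[i] ⟨a, ha⟩).1 (step^[i + 1] ⟨a, ha⟩).1
  rw [Function.iterate_succ_apply']
  exact hnextr _ _

section LimitQuotient

variable {Γ G H L : Type*} [Group Γ] [Group G] [Group H] [Group L]

theorem IsLimitQuotient.comp {q : H →* L} (hq : IsLimitQuotient Γ q) {ρ : G →* H}
    (hρ : Function.Surjective ρ) : IsLimitQuotient Γ (q.comp ρ) := by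
  obtain ⟨hsurj, h, hstable, hker⟩ := hq
  refine ⟨hsurj.comp hρ, fun t => (h t).comp ρ, fun x => hstable (ρ x), ?_⟩
  ext x
  change ρ x ∈ q.ker ↔ ρ x ∈ stableKer h
  rw [hker]

theorem quotGT_of_ker_lt {q₁ : G →* H} {q₂ : G →* L} (hq₁ : Function.Surjective q₁)
    (hq₂ : Function.Surjective q₂) (hlt : q₁.ker < q₂.ker) : QuotGT q₁ q₂ := by
  set τ := q₁.liftOfSurjective hq₁ ⟨q₂, hlt.le⟩
  have hτ : τ.comp q₁ = q₂ := q₁.liftOfRightInverse_comp _ _ _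
  obtain ⟨w, hw₂, hw₁⟩ := SetLike.exists_of_lt hlt
  refine ⟨τ, ?_, fun hbot => hw₁ ?_, hτ.symm⟩
  · rw [← hτ, MonoidHom.coe_comp] at hq₂
    exact hq₂.of_comp
  · have : q₁ w ∈ τ.ker := by rwa [MonoidHom.mem_ker, ← MonoidHom.comp_apply, hτ]
    rwa [hbot, Subgroup.mem_bot] at this

end LimitQuotient

namespace HasFiniteLimitQuotientCover

variable {Γ : Type*} [Group Γ] (hΓ : HasFiniteLimitQuotientCover.{uG} Γ)
  {G : Type} [Group G] [Group.FG G]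
include hΓ

theorem exists_limitQuotients_of_normal (N : Subgroup G) [N.Normal] :
    ∃ (k : ℕ) (M : Fin k → GrpCat.{uG}) (η : ∀ i, G →* M i),
      (∀ i, IsLimitQuotient Γ (η i)) ∧ (∀ i, N ≤ (η i).ker) ∧
      ∀ f : G →* Γ, N ≤ f.ker → ∃ i, (η i).ker ≤ f.ker := by
  let ρ : G →* ULift.{uG} (G ⧸ N) := MulEquiv.ulift.symm.toMonoidHom.comp (QuotientGroup.mk' N)
  have hρ : Function.Surjective ρ :=
    MulEquiv.ulift.symm.surjective.comp (QuotientGroup.mk'_surjective N)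
  obtain ⟨k, M, η, hη, hfactor⟩ := hΓ (GrpCat.of (ULift (G ⧸ N))) (Group.fg_of_surjective hρ)
  refine ⟨k, M, fun i => (η i).comp ρ, fun i => (hη i).comp hρ, fun i x hx => ?_,
    fun f hf => ?_⟩
  · have hρx : ρ x = 1 := by simp [ρ, QuotientGroup.eq_one_iff, hx]
    rw [MonoidHom.mem_ker, MonoidHom.comp_apply, hρx, map_one]
  · obtain ⟨i, g, hg⟩ := hfactor ((QuotientGroup.lift N f hf).comp MulEquiv.ulift.toMonoidHom)
    refine ⟨i, fun x hx => ?_⟩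
    have hfx : f x = g (η i (ρ x)) := by
      rw [← MonoidHom.comp_apply g, ← hg]
      simp [ρ]
    have hx' : η i (ρ x) = 1 := hx
    rw [MonoidHom.mem_ker, hfx, hx', map_one]

variable {ι : Type*} {l : Filter ι} {h : ι → G →* Γ}

theorem exists_limitQuotient_frequently {N : Subgroup G} [N.Normal]
    (hN : ∃ᶠ i in l, N ≤ (h i).ker) :
    ∃ (M : GrpCat.{uG}) (Q : G →* M),
      IsLimitQuotient Γ Q ∧ N ≤ Q.ker ∧ ∃ᶠ i in l, Q.ker ≤ (h i).ker := by
  obtain ⟨k, M, η, hη, hNη, hfactor⟩ := hΓ.exists_limitQuotients_of_normal N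
  have : ∃ᶠ i in l, ∃ j, (η j).ker ≤ (h i).ker := hN.mono fun i hi => hfactor (h i) hi
  obtain ⟨j, hj⟩ := frequently_exists.mp this
  exact ⟨M j, η j, hη j, hNη j, hj⟩

theorem exists_quotGT_frequently {S : Set G} (hS : ∀ w ∈ S, ∀ᶠ i in l, h i w = 1)
    (hfail : ∀ i, ∃ w ∈ S, h i w ≠ 1) {M : GrpCat.{uG}} {Q : G →* M}
    (hQ : IsLimitQuotient Γ Q) (hfreq : ∃ᶠ i in l, Q.ker ≤ (h i).ker) :
    ∃ (M' : GrpCat.{uG}) (Q' : G →* M'),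
      IsLimitQuotient Γ Q' ∧ (∃ᶠ i in l, Q'.ker ≤ (h i).ker) ∧ QuotGT Q Q' := by
  obtain ⟨i, hi⟩ := hfreq.exists
  obtain ⟨w, hwS, hw⟩ := hfail i
  have hwQ : w ∉ Q.ker := fun hwQ => hw (hi hwQ)
  have hN : ∃ᶠ i in l, Q.ker ⊔ Subgroup.normalClosure {w} ≤ (h i).ker :=
    (hfreq.and_eventually (hS w hwS)).mono fun i hi =>
      sup_le hi.1 (Subgroup.normalClosure_le_normal (Set.singleton_subset_iff.mpr hi.2))
  obtain ⟨M', Q', hQ', hNQ', hfreq'⟩ := hΓ.exists_limitQuotient_frequently hN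
  have hwQ' : w ∈ Q'.ker :=
    hNQ' (Subgroup.mem_sup_right (Subgroup.subset_normalClosure rfl))
  refine ⟨M', Q', hQ', hfreq', quotGT_of_ker_lt hQ.1 hQ'.1 ?_⟩
  exact SetLike.lt_iff_le_and_exists.mpr ⟨le_sup_left.trans hNQ', w, hwQ', hwQ⟩

end HasFiniteLimitQuotientCover

theorem statement_7_general {Γ : Type*} [Group Γ] (n : ℕ)
    (hdcc : ¬ ∃ (R : ℕ → GrpCat.{uG}) (q : ∀ i, FreeGroup (Fin n) →* R i),
      (∀ i, IsLimitQuotient Γ (q i)) ∧ ∀ i, QuotGT (q i) (q (i + 1)))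
    (hmax : ∀ (H : GrpCat.{uG}), Group.FG H →
      ∃ (k : ℕ) (M : Fin k → GrpCat.{uG}) (η : ∀ i, H →* M i),
        (∀ i, IsLimitQuotient Γ (η i)) ∧
        ∀ f : H →* Γ, ∃ (i : Fin k) (g : M i →* Γ), f = g.comp (η i))
    (S : Set (FreeGroup (Fin n))) :
    ∃ S₀ : Finset (FreeGroup (Fin n)), ↑S₀ ⊆ S ∧
      ∀ h : FreeGroup (Fin n) →* Γ, (∀ w ∈ S₀, h w = 1) → ∀ w ∈ S, h w = 1 := by
  by_contra! hcon
  have hΓ : HasFiniteLimitQuotientCover.{uG} Γ := hmax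
  choose h hkill hfail using fun T : Finset S =>
    hcon (T.map (Function.Embedding.subtype _)) (by simp)
  have hS : ∀ w ∈ S, ∀ᶠ T in atTop, h T w = 1 := fun w hw =>
    (eventually_ge_atTop {⟨w, hw⟩}).mono fun T hT => hkill T w (by simpa [hw] using hT)
  obtain ⟨M₀, Q₀, hQ₀, -, hfreq₀⟩ :=
    hΓ.exists_limitQuotient_frequently (h := h) (l := atTop) (N := ⊥)
      (.of_forall fun _ => bot_le)
  obtain ⟨q, hq⟩ := exists_seq_forall_rel_succ
    (P := fun Q : Σ M : GrpCat.{uG}, FreeGroup (Fin n) →* M =>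
      IsLimitQuotient Γ Q.2 ∧ ∃ᶠ T in atTop, Q.2.ker ≤ (h T).ker)
    (r := fun Q Q' => QuotGT Q.2 Q'.2) (a := ⟨M₀, Q₀⟩) ⟨hQ₀, hfreq₀⟩ fun _ ⟨hQ, hfreq⟩ => by
      obtain ⟨M', Q', hQ', hfreq', hgt⟩ := hΓ.exists_quotGT_frequently hS hfail hQ hfreq
      exact ⟨⟨M', Q'⟩, ⟨hQ', hfreq'⟩, hgt⟩
  exact hdcc ⟨fun i => (q i).1, fun i => (q i).2, fun i => (hq i).1.1, fun i => (hq i).2⟩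

/-- suppose (i) there is no infinite strictly descending sequence of
`Γ`-limit quotients of the free group `F_n`, and (ii) every finitely generated group `H`
admits finitely many `Γ`-limit quotients through which every homomorphism `H →* Γ`
factors.  Then every system of equations over `Γ` in `n` variables (a subset `S` of
`F_n`) is equivalent to a finite subsystem. -/
theorem statement_7 {Γ : Type*} [Group Γ] (n : ℕ) (hn : 1 ≤ n)
    (hdcc : ¬ ∃ (R : ℕ → GrpCat.{uG}) (q : ∀ i, FreeGroup (Fin n) →* R i),
      (∀ i, IsLimitQuotient Γ (q i)) ∧ ∀ i, QuotGT (q i) (q (i + 1)))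
    (hmax : ∀ (H : GrpCat.{uG}), Group.FG H →
      ∃ (k : ℕ) (M : Fin k → GrpCat.{uG}) (η : ∀ i, H →* M i),
        (∀ i, IsLimitQuotient Γ (η i)) ∧
        ∀ f : H →* Γ, ∃ (i : Fin k) (g : M i →* Γ), f = g.comp (η i))
    (S : Set (FreeGroup (Fin n))) :
    ∃ S₀ : Finset (FreeGroup (Fin n)), ↑S₀ ⊆ S ∧
      ∀ h : FreeGroup (Fin n) →* Γ, (∀ w ∈ S₀, h w = 1) → ∀ w ∈ S, h w = 1 :=
  statement_7_general n hdcc hmax S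
end

section
/- Let L be a group in which every nontrivial abelian subgroup is malnormal. If H is a subgroup of L possessing an abelian normal subgroup E ⊴ H such that the quotient H/E is cyclic, then H is abelian. (In a group with malnormal abelian subgroups, every abelian-by-cyclic subgroup is abelian.) -/
/-- A subgroup is abelian if all of its elements commute. -/
def IsAbelianSubgroup {L : Type*} [Group L] (P : Subgroup L) : Prop :=
  ∀ x ∈ P, ∀ y ∈ P, x * y = y * x

/-- A subgroup `P ≤ L` is malnormal if `gPg⁻¹ ∩ P ≠ {1}` implies `g ∈ P`. -/
def Malnormal {L : Type*} [Group L] (P : Subgroup L) : Prop :=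
  ∀ g : L, (∃ x ∈ P, x ≠ 1 ∧ g * x * g⁻¹ ∈ P) → g ∈ P

/-- A maximal abelian subgroup: an abelian subgroup not properly contained in any abelian
subgroup. -/
def IsMaximalAbelian {L : Type*} [Group L] (M : Subgroup L) : Prop :=
  IsAbelianSubgroup M ∧ ∀ M' : Subgroup L, IsAbelianSubgroup M' → M ≤ M' → M' = M


/-
If `E` is trivial, then `H ≅ H ⧸ E` is cyclic, hence abelian. Otherwise the image of `E` in `L`
is a nontrivial abelian subgroup normalised by `H`, so malnormality forces `H` inside it.
-/

section

variable {L : Type*} [Group L]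

theorem IsAbelianSubgroup.of_isCyclic {P : Subgroup L} [IsCyclic P] : IsAbelianSubgroup P := by
  let := IsCyclic.commGroup (α := P)
  intro x hx y hy
  exact congrArg Subtype.val (mul_comm (⟨x, hx⟩ : P) ⟨y, hy⟩)

theorem IsAbelianSubgroup.mono {P Q : Subgroup L} (hP : IsAbelianSubgroup P) (hQP : Q ≤ P) :
    IsAbelianSubgroup Q :=
  fun x hx y hy => hP x (hQP hx) y (hQP hy)

theorem IsAbelianSubgroup.map {G : Type*} [Group G] {E : Subgroup G} (hE : IsAbelianSubgroup E)
    (f : G →* L) : IsAbelianSubgroup (E.map f) := by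
  rintro _ ⟨a, ha, rfl⟩ _ ⟨b, hb, rfl⟩
  rw [← map_mul, ← map_mul, hE a ha b hb]

theorem Malnormal.le_of_le_normalizer {P K : Subgroup L} (hP : Malnormal P) (hP_ne : P ≠ ⊥)
    (hK : K ≤ Subgroup.normalizer (P : Set L)) : K ≤ P := by
  obtain ⟨x, hxP, hx⟩ := P.bot_or_exists_ne_one.resolve_left hP_ne
  exact fun g hg => hP g ⟨x, hxP, hx, (hK hg x).mp hxP⟩

end

/-- in a group `L` in which every nontrivial abelian subgroup is malnormal,
every abelian-by-cyclic subgroup is abelian: if `H ≤ L` has an abelian normal subgroup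
`E ⊴ H` with `H / E` cyclic, then `H` is abelian. -/
theorem statement_14 {L : Type*} [Group L]
    (hmal : ∀ P : Subgroup L, P ≠ ⊥ → IsAbelianSubgroup P → Malnormal P)
    (H : Subgroup L) (E : Subgroup ↥H) [E.Normal]
    (hE : IsAbelianSubgroup E) (hcyc : IsCyclic (↥H ⧸ E)) :
    IsAbelianSubgroup H := by
  rcases eq_or_ne E ⊥ with rfl | hE_ne
  · have : IsCyclic H := isCyclic_of_surjective _ (QuotientGroup.quotientBot (G := H)).surjective
    exact .of_isCyclic
  · set E' := E.map H.subtype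
    have hE'_ne : E' ≠ ⊥ :=
      (Subgroup.map_eq_bot_iff_of_injective E H.subtype_injective).not.mpr hE_ne
    have hE'_ab : IsAbelianSubgroup E' := hE.map H.subtype
    have hH : H ≤ Subgroup.normalizer (E' : Set L) := by
      have := Subgroup.le_normalizer_map (H := E) H.subtype
      rwa [Subgroup.normalizer_eq_top, ← MonoidHom.range_eq_map, Subgroup.range_subtype] at this
    exact hE'_ab.mono ((hmal E' hE'_ne hE'_ab).le_of_le_normalizer hE'_ne hH)
end
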